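/- In the setting of the previous statement, suppose additionally there exist $\alpha > 0$, $\beta > 0$, $1 < q < \infty$, $h \in (0,1]$ and $Q : \mathbb{N} \to [0,\infty)$ such that (i) $\mathbb{P}[\tau \ge k] \le \alpha e^{-\beta k}$ for all $k \in \mathbb{N}$, (ii) $\|\sup_{t \in [k,k+1)} |X_t - \bar X_t|\|_{L^q} \le Q(k)\, h^{1/2}$ for all $k$, and (iii) $c := \sum_{k=0}^\infty e^{\beta(1/q - 1)k} Q(k) < \infty$. Then $\mathbb{E}\,|X_\vartheta - \bar X_\vartheta| \le \alpha^{1-1/q}\, c\, h^{1/2}$. -/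

import Mathlib

/-!
Cut `Ω` into the events `{ϑ ∈ [k, k+1)}`. On the `k`-th event the error at `ϑ` is at most the
supremum of the error over `[k, k+1)`, and Hölder's inequality with exponents `q` and `q/(q-1)`
bounds its integral there by `Q(k) h^{1/2} · P(ϑ ∈ [k, k+1))^{1-1/q}`. Since `ϑ ≤ τ`, that
probability is at most `P(τ ≥ k) ≤ α e^{-βk}`; summing over `k` gives `α^{1-1/q} c h^{1/2}`.
-/

open MeasureTheory Set Real
open scoped ENNReal

/-- If `f` is unbounded on `s`, both sides are the junk value `0`. -/
theorem Real.biSup_eq_iSup_subtype {ι : Type*} {f : ι → ℝ} (hf : ∀ i, 0 ≤ f i) (s : Set ι) :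
    ⨆ i ∈ s, f i = ⨆ i : s, f i := by
  by_cases hb : BddAbove (range fun i : s => f i)
  · exact (ciSup_subtype_fun hb (Real.sSup_empty.trans_le (Real.iSup_nonneg fun i => hf i))).symm
  · rw [cbiSup_of_not_bddAbove hb, ciSup_of_not_bddAbove hb]

theorem le_biSup_of_bddAbove_image {α ι : Type*} [ConditionallyCompleteLattice α] {f : ι → α}
    {s : Set ι} (hf : BddAbove (f '' s)) {i : ι} (hi : i ∈ s) : f i ≤ ⨆ j ∈ s, f j :=
  le_ciSup₂ (f := fun j (_ : j ∈ s) => f j)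
    (hf.mono (by rintro _ ⟨_, ⟨j, rfl⟩, ⟨hj, rfl⟩⟩; exact ⟨j, hj, rfl⟩)) i hi

theorem measurable_biSup_of_continuous {Ω T : Type*} [MeasurableSpace Ω] [TopologicalSpace T]
    [SecondCountableTopology T] {F : T → Ω → ℝ} (hc : ∀ ω, Continuous fun t => F t ω)
    (hm : ∀ t, Measurable (F t)) (h0 : ∀ t ω, 0 ≤ F t ω) (s : Set T) :
    Measurable fun ω => ⨆ t ∈ s, F t ω := by
  obtain ⟨D, hDc, hD⟩ := TopologicalSpace.exists_countable_dense s
  have : Countable D := hDc.to_subtype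
  have hsup : ∀ ω, ⨆ t ∈ s, F t ω = ⨆ t : D, F t ω := fun ω => by
    rw [Real.biSup_eq_iSup_subtype (h0 · ω)]
    exact (hD.ciSup' ((hc ω).comp continuous_subtype_val)).symm
  simp_rw [hsup]
  exact Measurable.iSup fun t => hm t

section LpBlocks

variable {Ω E : Type*} {m0 : MeasurableSpace Ω} {μ : Measure Ω} [NormedAddCommGroup E]

theorem setLIntegral_enorm_le_eLpNorm_mul_measure_rpow {p : ℝ≥0∞} (hp : 1 ≤ p) {f : Ω → E}
    (hf : AEStronglyMeasurable f μ) (s : Set Ω) :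
    ∫⁻ ω in s, ‖f ω‖ₑ ∂μ ≤ eLpNorm f p μ * μ s ^ (1 - 1 / p.toReal) := by
  calc ∫⁻ ω in s, ‖f ω‖ₑ ∂μ = eLpNorm f 1 (μ.restrict s) := eLpNorm_one_eq_lintegral_enorm.symm
    _ ≤ eLpNorm f p (μ.restrict s) * μ.restrict s univ ^ (1 / (1 : ℝ≥0∞).toReal - 1 / p.toReal) :=
      eLpNorm_le_eLpNorm_mul_rpow_measure_univ hp hf.restrict
    _ ≤ eLpNorm f p μ * μ s ^ (1 - 1 / p.toReal) := by
      rw [Measure.restrict_apply_univ, ENNReal.toReal_one, div_one]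
      gcongr
      exact Measure.restrict_le_self

theorem lintegral_le_tsum_eLpNorm_mul_measure_rpow {ι : Type*} [Countable ι] {p : ℝ≥0∞}
    (hp : 1 ≤ p) {f : Ω → ℝ≥0∞} {g : ι → Ω → E} (hg : ∀ i, AEStronglyMeasurable (g i) μ)
    {s : ι → Set Ω} (hs : ⋃ i, s i = univ) (hfg : ∀ i, ∀ ω ∈ s i, f ω ≤ ‖g i ω‖ₑ) :
    ∫⁻ ω, f ω ∂μ ≤ ∑' i, eLpNorm (g i) p μ * μ (s i) ^ (1 - 1 / p.toReal) :=
  calc ∫⁻ ω, f ω ∂μ = ∫⁻ ω in ⋃ i, s i, f ω ∂μ := by rw [hs, Measure.restrict_univ]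
    _ ≤ ∑' i, ∫⁻ ω in s i, f ω ∂μ := lintegral_iUnion_le s f
    _ ≤ ∑' i, ∫⁻ ω in s i, ‖g i ω‖ₑ ∂μ :=
      ENNReal.tsum_le_tsum fun i => setLIntegral_mono_ae (hg i).enorm.restrict (ae_of_all _ (hfg i))
    _ ≤ _ := ENNReal.tsum_le_tsum fun i =>
      setLIntegral_enorm_le_eLpNorm_mul_measure_rpow hp (hg i) (s i)

theorem lintegral_le_of_eLpNorm_le_of_measure_le {ι : Type*} [Countable ι] {q : ℝ} (hq : 1 ≤ q)
    {f : Ω → ℝ≥0∞} {g : ι → Ω → E} (hg : ∀ i, AEStronglyMeasurable (g i) μ) {s : ι → Set Ω}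
    (hs : ⋃ i, s i = univ) (hfg : ∀ i, ∀ ω ∈ s i, f ω ≤ ‖g i ω‖ₑ) {a b : ι → ℝ}
    (ha : ∀ i, 0 ≤ a i) (hb : ∀ i, 0 ≤ b i) (hgb : ∀ i, eLpNorm (g i) (.ofReal q) μ ≤ .ofReal (b i))
    (hsa : ∀ i, μ (s i) ≤ .ofReal (a i)) {c : ℝ}
    (hc : HasSum (fun i => b i * a i ^ (1 - 1 / q)) c) :
    ∫⁻ ω, f ω ∂μ ≤ .ofReal c := by
  have hr : 0 ≤ 1 - 1 / q := sub_nonneg.2 (div_le_one_of_le₀ hq (by linarith))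
  calc ∫⁻ ω, f ω ∂μ
      ≤ ∑' i, eLpNorm (g i) (.ofReal q) μ * μ (s i) ^ (1 - 1 / (ENNReal.ofReal q).toReal) :=
        lintegral_le_tsum_eLpNorm_mul_measure_rpow (ENNReal.one_le_ofReal.2 hq) hg hs hfg
    _ ≤ ∑' i, .ofReal (b i * a i ^ (1 - 1 / q)) := ENNReal.tsum_le_tsum fun i => by
        rw [ENNReal.toReal_ofReal (by linarith), ENNReal.ofReal_mul (hb i),
          ← ENNReal.ofReal_rpow_of_nonneg (ha i) hr]
        gcongr
        exacts [hgb i, hsa i]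
    _ = .ofReal c := by
        have hterm : ∀ i, 0 ≤ b i * a i ^ (1 - 1 / q) :=
          fun i => mul_nonneg (hb i) (rpow_nonneg (ha i) _)
        rw [← ENNReal.ofReal_tsum_of_nonneg hterm hc.summable, hc.tsum_eq]

end LpBlocks

theorem ContinuousOn.le_biSup_Ico {F : ℝ → ℝ} {a b t : ℝ} (hF : ContinuousOn F (Icc a b))
    (ht : t ∈ Ico a b) : F t ≤ ⨆ s ∈ Ico a b, F s :=
  le_biSup_of_bddAbove_image
    ((isCompact_Icc.bddAbove_image hF).mono (image_mono Ico_subset_Icc_self)) ht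

theorem stmt6_general
    {Ω : Type*} {m0 : MeasurableSpace Ω} (μ : Measure Ω) [IsProbabilityMeasure μ]
    (ℱ : Filtration ℝ m0) {d : ℕ}
    (X Y : ℝ → Ω → EuclideanSpace ℝ (Fin d))
    (hXcont : ∀ ω, Continuous fun t => X t ω) (hYcont : ∀ ω, Continuous fun t => Y t ω)
    (hXadp : Adapted ℱ X) (hYadp : Adapted ℱ Y)
    (ϑ τ : Ω → ℝ)
    (hϑ0 : ∀ ω, 0 ≤ ϑ ω) (hϑτ : ∀ ω, ϑ ω ≤ τ ω)
    (q : ℝ) (hq : 1 < q)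
    (α β h : ℝ) (hα : 0 < α)
    (Q : ℕ → ℝ) (hQ0 : ∀ k, 0 ≤ Q k)
    (htail : ∀ k : ℕ, μ {ω | (k : ℝ) ≤ τ ω} ≤ ENNReal.ofReal (α * Real.exp (-β * k)))
    (hblock : ∀ k : ℕ,
      eLpNorm (fun ω => ⨆ t ∈ Set.Ico (k : ℝ) ((k : ℝ) + 1), ‖X t ω - Y t ω‖)
          (ENNReal.ofReal q) μ
        ≤ ENNReal.ofReal (Q k * Real.sqrt h))
    (c : ℝ) (hc : HasSum (fun k : ℕ => Real.exp (β * (1 / q - 1) * k) * Q k) c) :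
    ∫⁻ ω, (‖X (ϑ ω) ω - Y (ϑ ω) ω‖₊ : ENNReal) ∂μ
      ≤ ENNReal.ofReal (α ^ (1 - 1 / q) * c * Real.sqrt h) := by
  have hdist : ∀ ω, Continuous fun t => ‖X t ω - Y t ω‖ :=
    fun ω => ((hXcont ω).sub (hYcont ω)).norm
  have hblock_meas : ∀ k : ℕ, Measurable fun ω => ⨆ t ∈ Ico (k : ℝ) (k + 1), ‖X t ω - Y t ω‖ :=
    fun k => measurable_biSup_of_continuous hdist
      (fun t => (((hXadp t).mono (ℱ.le t) le_rfl).sub ((hYadp t).mono (ℱ.le t) le_rfl)).norm)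
      (fun _ _ => norm_nonneg _) _
  have hcover : ⋃ k : ℕ, ϑ ⁻¹' Ico (k : ℝ) (k + 1) = univ := eq_univ_of_forall fun ω =>
    mem_iUnion.2 ⟨⌊ϑ ω⌋₊, Nat.floor_le (hϑ0 ω), Nat.lt_floor_add_one _⟩
  have hsum : HasSum (fun k : ℕ => Q k * √h * (α * exp (-β * k)) ^ (1 - 1 / q))
      (α ^ (1 - 1 / q) * c * √h) := by
    rw [mul_right_comm]
    refine (hc.mul_left _).congr_fun fun k => ?_
    rw [mul_rpow hα.le (exp_nonneg _), ← exp_mul,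
      show -β * k * (1 - 1 / q) = β * (1 / q - 1) * k by ring]
    ring
  refine lintegral_le_of_eLpNorm_le_of_measure_le hq.le
    (fun k => (hblock_meas k).aestronglyMeasurable) hcover (fun k ω hω => ?_)
    (fun k => by positivity) (fun k => mul_nonneg (hQ0 k) (sqrt_nonneg h)) hblock
    (fun k => (measure_mono fun ω hω => hω.1.trans (hϑτ ω)).trans (htail k)) hsum
  rw [← enorm_eq_nnnorm, ← ofReal_norm, Real.enorm_eq_ofReal_abs]
  exact ENNReal.ofReal_le_ofReal
    (((hdist ω).continuousOn.le_biSup_Ico hω).trans (le_abs_self _))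

/-- Lemma 3.2 (b) of the paper: under exponential tail decay of `τ` and blockwise
`L^q` bounds of order `h^(1/2)` on the error, the error at the stopping time `ϑ ≤ τ`
is of order `h^(1/2)` in `L^1`. -/
theorem stmt6
    {Ω : Type*} {m0 : MeasurableSpace Ω} (μ : Measure Ω) [IsProbabilityMeasure μ]
    (ℱ : Filtration ℝ m0) {d : ℕ}
    (X Y : ℝ → Ω → EuclideanSpace ℝ (Fin d))
    (hXcont : ∀ ω, Continuous fun t => X t ω) (hYcont : ∀ ω, Continuous fun t => Y t ω)
    (hXadp : Adapted ℱ X) (hYadp : Adapted ℱ Y)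
    (ϑ τ : Ω → ℝ) (hϑ : IsStoppingTime ℱ (fun ω => (ϑ ω : WithTop ℝ)))
    (hτ : IsStoppingTime ℱ (fun ω => (τ ω : WithTop ℝ)))
    (hϑ0 : ∀ ω, 0 ≤ ϑ ω) (hϑτ : ∀ ω, ϑ ω ≤ τ ω)
    (q : ℝ) (hq : 1 < q)
    (α β h : ℝ) (hα : 0 < α) (hβ : 0 < β) (hh0 : 0 < h) (hh1 : h ≤ 1)
    (Q : ℕ → ℝ) (hQ0 : ∀ k, 0 ≤ Q k)
    (htail : ∀ k : ℕ, μ {ω | (k : ℝ) ≤ τ ω} ≤ ENNReal.ofReal (α * Real.exp (-β * k)))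
    (hblock : ∀ k : ℕ,
      eLpNorm (fun ω => ⨆ t ∈ Set.Ico (k : ℝ) ((k : ℝ) + 1), ‖X t ω - Y t ω‖)
          (ENNReal.ofReal q) μ
        ≤ ENNReal.ofReal (Q k * Real.sqrt h))
    (c : ℝ) (hc : HasSum (fun k : ℕ => Real.exp (β * (1 / q - 1) * k) * Q k) c) :
    ∫⁻ ω, (‖X (ϑ ω) ω - Y (ϑ ω) ω‖₊ : ENNReal) ∂μ
      ≤ ENNReal.ofReal (α ^ (1 - 1 / q) * c * Real.sqrt h) :=
  stmt6_general μ ℱ X Y hXcont hYcont hXadp hYadp ϑ τ hϑ0 hϑτ q hq α β h hα Q hQ0 htail hblock c hc
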